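/- arXiv:2110.15638 — 2 statements merged into one kernel-verified Lean document; each statement's English description precedes it below -/
import Mathlib

section
/- Let 𝔛 be a complete class of finite groups, G a finite group and N a normal subgroup of G. Then k_𝔛(G/N) ≤ k_𝔛(G); moreover every 𝔛-maximal subgroup of G/N is the image of some 𝔛-maximal subgroup of G under the canonical epimorphism G → G/N. -/
/-! The second claim is the heart of the matter: if `φ : L → Q` is onto and `Q ∈ 𝔛`, some
`𝔛`-subgroup of `L` maps onto `Q`. Induct on `|L|`. A proper supplement of `ker φ` lets us pass
to it. Otherwise `ker φ` is nongenerating, so by the Frattini argument every Sylow subgroup `A`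
of `ker φ` is normal in `L`, and by Schur–Zassenhaus its prime `p` divides `|Q|`; then `𝔛`
contains a group of order `p`, hence the `p`-group `A`, and induction applied to `L/A → Q`
forces `L/A ∈ 𝔛`, so `L ∈ 𝔛`. Lifting an `𝔛`-maximal subgroup of `G/N` this way and enlarging
the lift to an `𝔛`-maximal subgroup of `G` gives the second claim; since images of conjugate
subgroups are conjugate, the classes of `G/N` are images of classes of `G`. -/

open scoped Pointwise

/-- A class of (finite) groups, given as a property of group types. -/
abbrev GroupClass : Type 1 := ∀ (G : Type) [Group G], Prop

/-- A complete class of finite groups: nonempty, closed under isomorphism,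
subgroups, homomorphic images, and extensions. -/
def IsCompleteClass (X : GroupClass) : Prop :=
  (∃ (G : Type) (inst : Group G), Finite G ∧ @X G inst) ∧
  (∀ (G H : Type) [Group G] [Group H] [Finite G], (G ≃* H) → X G → X H) ∧
  (∀ (G : Type) [Group G] [Finite G], X G → ∀ H : Subgroup G, X ↥H) ∧
  (∀ (G H : Type) [Group G] [Group H] [Finite G] (φ : G →* H),
      Function.Surjective φ → X G → X H) ∧
  (∀ (G : Type) [Group G] [Finite G] (N : Subgroup G) [N.Normal],
      X ↥N → X (G ⧸ N) → X G)

/-- The conjugate `g H g⁻¹` of a subgroup. -/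
def conjSub {G : Type} [Group G] (g : G) (H : Subgroup G) : Subgroup G :=
  H.map (MulAut.conj g).toMonoidHom

/-- The number of conjugacy classes meeting a (conjugation-invariant) set of subgroups. -/
noncomputable def numClasses {G : Type} [Group G] (S : Set (Subgroup G)) : ℕ :=
  Nat.card {C : Set (Subgroup G) // ∃ H ∈ S, C = {K | ∃ g : G, K = conjSub g H}}

/-- An `𝔛`-maximal subgroup: an `𝔛`-subgroup maximal under inclusion among
`𝔛`-subgroups. -/
def IsXMaximal (X : GroupClass) {G : Type} [Group G] (H : Subgroup G) : Prop :=
  X ↥H ∧ ∀ K : Subgroup G, X ↥K → H ≤ K → H = K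

/-- `k_𝔛(G)`: the number of conjugacy classes of `𝔛`-maximal subgroups of `G`. -/
noncomputable def kX (X : GroupClass) (G : Type) [Group G] : ℕ :=
  numClasses {H : Subgroup G | IsXMaximal X H}

theorem Subgroup.normal_of_le_center {G : Type*} [Group G] {H : Subgroup G}
    (hH : H ≤ Subgroup.center G) : H.Normal :=
  ⟨fun n hn g => by rwa [(Subgroup.mem_center_iff.mp (hH hn) g), mul_inv_cancel_right]⟩

namespace IsCompleteClass

variable {X : GroupClass}

theorem of_mulEquiv (hX : IsCompleteClass X) {G H : Type} [Group G] [Group H] [Finite G]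
    (e : G ≃* H) (hG : X G) : X H :=
  hX.2.1 G H e hG

theorem subgroup (hX : IsCompleteClass X) {G : Type} [Group G] [Finite G] (hG : X G)
    (H : Subgroup G) : X H :=
  hX.2.2.1 G hG H

theorem of_surjective (hX : IsCompleteClass X) {G H : Type} [Group G] [Group H] [Finite G]
    {φ : G →* H} (hφ : Function.Surjective φ) (hG : X G) : X H :=
  hX.2.2.2.1 G H φ hφ hG

theorem of_quotient (hX : IsCompleteClass X) {G : Type} [Group G] [Finite G] (N : Subgroup G)
    [N.Normal] (hN : X N) (hGN : X (G ⧸ N)) : X G :=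
  hX.2.2.2.2 G N hN hGN

theorem map (hX : IsCompleteClass X) {G H : Type} [Group G] [Group H] [Finite G]
    (φ : G →* H) {K : Subgroup G} (hK : X K) : X (K.map φ) :=
  hX.of_surjective (φ.subgroupMap_surjective K) hK

theorem of_subsingleton (hX : IsCompleteClass X) (G : Type) [Group G] [Subsingleton G] : X G := by
  obtain ⟨H, _, _, hH⟩ := hX.1
  have : Unique G := ⟨⟨1⟩, fun _ => Subsingleton.elim _ _⟩
  exact hX.of_mulEquiv MulEquiv.ofUnique (hX.subgroup hH ⊥)

theorem of_isPGroup (hX : IsCompleteClass X) {p : ℕ} [Fact p.Prime] {C : Type} [Group C]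
    [Finite C] (hC : Nat.card C = p) (hXC : X C) {P : Type} [Group P] [Finite P]
    (hP : IsPGroup p P) : X P := by
  induction h : Nat.card P using Nat.strong_induction_on generalizing P with
  | _ n ih =>
  rcases subsingleton_or_nontrivial P with hP1 | hP1
  · exact hX.of_subsingleton P
  have := hP.center_nontrivial
  have hpZ : p ∣ Nat.card (Subgroup.center P) :=
    ((hP.to_subgroup _).card_eq_or_dvd).resolve_left Finite.one_lt_card.ne'
  obtain ⟨z, hz⟩ := exists_prime_orderOf_dvd_card' p hpZ
  let Z := Subgroup.zpowers (z : P)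
  have : Z.Normal := Subgroup.normal_of_le_center (Subgroup.zpowers_le.mpr z.2)
  have hZ : Nat.card Z = p := by rw [Nat.card_zpowers, Subgroup.orderOf_coe, hz]
  have hcard : Nat.card (P ⧸ Z) < n := by
    rw [← h, Subgroup.card_eq_card_quotient_mul_card_subgroup Z, hZ]
    exact lt_mul_right Nat.card_pos (Fact.out : p.Prime).one_lt
  exact hX.of_quotient Z (hX.of_mulEquiv (mulEquivOfPrimeCardEq hC hZ) hXC)
    (ih _ hcard (hP.to_quotient Z) rfl)

end IsCompleteClass

section Nongenerating

variable {G : Type} [Group G] [Finite G] {N : Subgroup G} [N.Normal]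

theorem Sylow.normal_map_subtype_of_forall_sup_eq_top
    (hN : ∀ V : Subgroup G, V ⊔ N = ⊤ → V = ⊤) {p : ℕ} [Fact p.Prime] (P : Sylow p N) :
    ((P : Subgroup N).map N.subtype).Normal :=
  Subgroup.normalizer_eq_top_iff.mp (hN _ (Sylow.normalizer_sup_eq_top P))

theorem Subgroup.dvd_index_of_forall_sup_eq_top (hN : ∀ V : Subgroup G, V ⊔ N = ⊤ → V = ⊤)
    {p : ℕ} [hp : Fact p.Prime] (hpN : p ∣ Nat.card N) : p ∣ N.index := by
  by_contra hpi
  obtain ⟨P⟩ : Nonempty (Sylow p N) := inferInstance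
  let A := (P : Subgroup N).map N.subtype
  have : A.Normal := Sylow.normal_map_subtype_of_forall_sup_eq_top hN P
  have hcop : (Nat.card A).Coprime A.index := by
    obtain ⟨k, hk⟩ := IsPGroup.iff_card.mp P.2
    rw [Subgroup.index_map_subtype, Subgroup.card_map_of_injective N.subtype_injective]
    exact P.card_coprime_index.mul_right
      (hk ▸ Nat.Coprime.pow_left k ((Nat.Prime.coprime_iff_not_dvd hp.out).mpr hpi))
  obtain ⟨U, hU⟩ := Subgroup.exists_right_complement'_of_coprime hcop
  have hUN : U ⊔ N = ⊤ := by
    rw [eq_top_iff, ← hU.sup_eq_top, sup_comm]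
    exact sup_le_sup_left (Subgroup.map_subtype_le _) U
  have hA : A = ⊥ := by simpa [hN U hUN] using hU.disjoint
  exact P.ne_bot_of_dvd_card hpN
    ((Subgroup.map_eq_bot_iff_of_injective _ N.subtype_injective).mp hA)

end Nongenerating

theorem exists_isXMaximal_le {X : GroupClass} {G : Type} [Group G] [Finite G] {U : Subgroup G}
    (hU : X U) : ∃ H : Subgroup G, IsXMaximal X H ∧ U ≤ H := by
  obtain ⟨H, hUH, hH⟩ := (Set.toFinite {K : Subgroup G | X K}).exists_le_maximal hU
  exact ⟨H, ⟨hH.prop, fun K hK hHK => le_antisymm hHK (hH.le_of_ge hK hHK)⟩, hUH⟩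

theorem QuotientGroup.eq_top_of_map_lift_eq_top {L Q : Type} [Group L] [Group Q] {φ : L →* Q}
    (hφ : ∀ V : Subgroup L, V.map φ = ⊤ → V = ⊤) {A : Subgroup L} [A.Normal]
    (hA : A ≤ φ.ker) {W : Subgroup (L ⧸ A)} (hW : W.map (QuotientGroup.lift A φ hA) = ⊤) :
    W = ⊤ := by
  have hπ := QuotientGroup.mk'_surjective A
  have hcomap : W.comap (QuotientGroup.mk' A) = ⊤ := by
    refine hφ _ (hW ▸ ?_)
    calc (W.comap (QuotientGroup.mk' A)).map φ
        = ((W.comap (QuotientGroup.mk' A)).map (QuotientGroup.mk' A)).map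
            (QuotientGroup.lift A φ hA) := by
          rw [Subgroup.map_map, QuotientGroup.lift_comp_mk']
      _ = W.map (QuotientGroup.lift A φ hA) := by
          rw [Subgroup.map_comap_eq_self_of_surjective hπ]
  rw [← Subgroup.map_comap_eq_self_of_surjective hπ W, hcomap,
    Subgroup.map_top_of_surjective _ hπ]

namespace IsCompleteClass

variable {X : GroupClass}

theorem exists_map_eq_top (hX : IsCompleteClass X) {L Q : Type} [Group L] [Group Q] [Finite L]
    {φ : L →* Q} (hφ : Function.Surjective φ) (hQ : X Q) :
    ∃ U : Subgroup L, X U ∧ U.map φ = ⊤ := by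
  induction h : Nat.card L using Nat.strong_induction_on generalizing L with
  | _ n ih =>
  have := Finite.of_surjective φ hφ
  by_cases hV : ∃ V : Subgroup L, V ≠ ⊤ ∧ V.map φ = ⊤
  · obtain ⟨V, hVtop, hVφ⟩ := hV
    have hsurj : Function.Surjective (φ.comp V.subtype) := by
      rw [← MonoidHom.range_eq_top, MonoidHom.range_comp, Subgroup.range_subtype, hVφ]
    have hcard : Nat.card V < n := h ▸ V.card_mul_index ▸
      lt_mul_of_one_lt_right Nat.card_pos (Subgroup.one_lt_index_of_ne_top hVtop)
    obtain ⟨U, hXU, hU⟩ := ih _ hcard hsurj rfl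
    exact ⟨U.map V.subtype, hX.map _ hXU, by rw [Subgroup.map_map, hU]⟩
  have hker : ∀ V : Subgroup L, V.map φ = ⊤ → V = ⊤ := fun V hVφ =>
    not_not.mp fun hne => hV ⟨V, hne, hVφ⟩
  have hkerN : ∀ V : Subgroup L, V ⊔ φ.ker = ⊤ → V = ⊤ := fun V hVN => hker V <| by
    rwa [← MonoidHom.range_eq_top.mpr hφ, Subgroup.map_eq_range_iff, codisjoint_iff]
  suffices hL : X L from ⟨⊤, hX.subgroup hL ⊤, Subgroup.map_top_of_surjective φ hφ⟩
  by_cases hbot : φ.ker = ⊥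
  · exact hX.of_mulEquiv (MulEquiv.ofBijective φ ⟨(φ.ker_eq_bot_iff).mp hbot, hφ⟩).symm hQ
  obtain ⟨p, hp, hpK⟩ := Nat.exists_prime_and_dvd (mt Subgroup.card_eq_one.mp hbot)
  have := Fact.mk hp
  obtain ⟨P⟩ : Nonempty (Sylow p φ.ker) := inferInstance
  let A := (P : Subgroup φ.ker).map φ.ker.subtype
  have : A.Normal := Sylow.normal_map_subtype_of_forall_sup_eq_top hkerN P
  have hAker : A ≤ φ.ker := Subgroup.map_subtype_le _
  have hAbot : A ≠ ⊥ :=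
    (Subgroup.map_eq_bot_iff_of_injective _ φ.ker.subtype_injective).not.mpr
      (P.ne_bot_of_dvd_card hpK)
  have hpQ : p ∣ Nat.card Q := by
    have := Subgroup.dvd_index_of_forall_sup_eq_top hkerN hpK
    rwa [Subgroup.index_ker, MonoidHom.range_eq_top.mpr hφ, Subgroup.card_top] at this
  obtain ⟨x, hx⟩ := exists_prime_orderOf_dvd_card' p hpQ
  have hXA : X A := hX.of_isPGroup (hx ▸ Nat.card_zpowers x) (hX.subgroup hQ _) (P.2.map _)
  have hcard : Nat.card (L ⧸ A) < n := h ▸ A.card_eq_card_quotient_mul_card_subgroup ▸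
    lt_mul_of_one_lt_right Nat.card_pos (A.one_lt_card_iff_ne_bot.mpr hAbot)
  obtain ⟨W, hXW, hW⟩ :=
    ih _ hcard (QuotientGroup.lift_surjective_of_surjective A φ hφ hAker) rfl
  have hWtop : W = ⊤ := QuotientGroup.eq_top_of_map_lift_eq_top hker hAker hW
  exact hX.of_quotient A hXA (hX.of_mulEquiv Subgroup.topEquiv (hWtop ▸ hXW))

theorem exists_map_eq (hX : IsCompleteClass X) {G Q : Type} [Group G] [Group Q] [Finite G]
    {π : G →* Q} (hπ : Function.Surjective π) {K : Subgroup Q} (hK : X K) :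
    ∃ U : Subgroup G, X U ∧ U.map π = K := by
  obtain ⟨U, hXU, hU⟩ :=
    hX.exists_map_eq_top (π.subgroupComap_surjective_of_surjective K hπ) hK
  refine ⟨U.map (K.comap π).subtype, hX.map _ hXU, ?_⟩
  rw [Subgroup.map_map, show π.comp (K.comap π).subtype = K.subtype.comp (π.subgroupComap K)
    from rfl, ← Subgroup.map_map, hU, ← MonoidHom.range_eq_map, Subgroup.range_subtype]

theorem exists_isXMaximal_map_eq (hX : IsCompleteClass X) {G Q : Type} [Group G] [Group Q]
    [Finite G] {π : G →* Q} (hπ : Function.Surjective π) {K : Subgroup Q}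
    (hK : IsXMaximal X K) : ∃ H : Subgroup G, IsXMaximal X H ∧ K = H.map π := by
  obtain ⟨U, hXU, hUK⟩ := hX.exists_map_eq hπ hK.1
  obtain ⟨H, hH, hUH⟩ := exists_isXMaximal_le hXU
  exact ⟨H, hH, hK.2 _ (hX.map π hH.1) (hUK ▸ Subgroup.map_mono hUH)⟩

end IsCompleteClass

theorem map_conjSub {G Q : Type} [Group G] [Group Q] (φ : G →* Q) (g : G) (H : Subgroup G) :
    (conjSub g H).map φ = conjSub (φ g) (H.map φ) := by
  simp only [conjSub, Subgroup.map_map]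
  congr 1
  ext x
  simp

theorem image_map_conjClass {G Q : Type} [Group G] [Group Q] {φ : G →* Q}
    (hφ : Function.Surjective φ) (H : Subgroup G) :
    Subgroup.map φ '' {K | ∃ g : G, K = conjSub g H} =
      {K | ∃ q : Q, K = conjSub q (H.map φ)} := by
  ext K
  constructor
  · rintro ⟨_, ⟨g, rfl⟩, rfl⟩
    exact ⟨φ g, map_conjSub φ g H⟩
  · rintro ⟨q, rfl⟩
    obtain ⟨g, rfl⟩ := hφ q
    exact ⟨conjSub g H, ⟨g, rfl⟩, map_conjSub φ g H⟩

theorem numClasses_le_of_surjective {G Q : Type} [Group G] [Group Q] [Finite G] {φ : G →* Q}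
    (hφ : Function.Surjective φ) {S : Set (Subgroup G)} {T : Set (Subgroup Q)}
    (hT : ∀ K ∈ T, ∃ H ∈ S, K = H.map φ) : numClasses T ≤ numClasses S := by
  refine (Set.ncard_le_ncard ?_ ((Set.toFinite _).image _)).trans
    (Set.ncard_image_le (f := Set.image (Subgroup.map φ)) (Set.toFinite _))
  rintro _ ⟨K, hK, rfl⟩
  obtain ⟨H, hH, rfl⟩ := hT K hK
  exact ⟨_, ⟨H, hH, rfl⟩, image_map_conjClass hφ H⟩

/-- `k_𝔛(G/N) ≤ k_𝔛(G)`, and every `𝔛`-maximal subgroup of `G/N` is the image of an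
`𝔛`-maximal subgroup of `G` under the canonical epimorphism `G → G/N`. -/
theorem kX_quotient_le_and_surj (X : GroupClass) (hXc : IsCompleteClass X)
    (G : Type) [Group G] [Finite G] (N : Subgroup G) [N.Normal] :
    kX X (G ⧸ N) ≤ kX X G ∧
    ∀ K : Subgroup (G ⧸ N), IsXMaximal X K →
      ∃ H : Subgroup G, IsXMaximal X H ∧ K = H.map (QuotientGroup.mk' N) := by
  have hsurj := fun K (hK : IsXMaximal X K) =>
    hXc.exists_isXMaximal_map_eq (QuotientGroup.mk'_surjective N) hK
  exact ⟨numClasses_le_of_surjective (QuotientGroup.mk'_surjective N) hsurj, hsurj⟩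
end

section
/- Let G be a group and N a normal subgroup of G that is an internal direct product of nonabelian simple subgroups, and let S be one of these simple factors. Suppose G = KN for some subgroup K of G. Then: (i) N_G(S) = N · N_K(S); (ii) Aut_G(S) = Inn(S) · Aut_K(S). -/
open scoped Pointwise

/-- `N` is the internal direct product of the nonabelian simple subgroups `Ss 0, …,
Ss (n-1)`: the factors are nonabelian simple, they generate `N`, they pairwise commute
elementwise, and each meets the subgroup generated by the others trivially. -/
def IsInternalDirectProductOfSimples {G : Type} [Group G] (N : Subgroup G)
    (n : ℕ) (Ss : Fin n → Subgroup G) : Prop :=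
  (∀ i, Ss i ≤ N) ∧
  (N = ⨆ i, Ss i) ∧
  (∀ i, IsSimpleGroup ↥(Ss i)) ∧
  (∀ i, ∃ x y : ↥(Ss i), x * y ≠ y * x) ∧
  (∀ i j, i ≠ j → ∀ x ∈ Ss i, ∀ y ∈ Ss j, x * y = y * x) ∧
  (∀ i, Ss i ⊓ (⨆ j ∈ ({i}ᶜ : Set (Fin n)), Ss j) = ⊥)

/-- `Aut_H(S)`: the set of automorphisms of `S` induced by conjugation by elements of
`N_H(S) = H ∩ N_G(S)` (via `s ↦ x⁻¹ s x`). -/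
def inducedAuts {G : Type} [Group G] (H S : Subgroup G) : Set (MulAut ↥S) :=
  {σ | ∃ x, x ∈ H ∧ x ∈ Subgroup.normalizer (S : Set G) ∧ ∀ s : ↥S, (σ s : G) = x⁻¹ * (s : G) * x}

/-!
Every factor other than `S` centralizes `S`, so `N ≤ S ⊔ C_G(S) ≤ N_G(S)`. Part (i) is then
Dedekind's modular law applied to `G = NK`. For (ii), write `x ∈ N_G(S)` as `x = k s z` with
`k ∈ K`, `s ∈ S`, `z ∈ C_G(S)`: the factor `z` acts trivially on `S`, so `x` induces the same
automorphism as `k s`, which is `Inn(s)⁻¹` composed with the automorphism induced by `k ∈ N_K(S)`.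
-/

namespace Subgroup

variable {G : Type*} [Group G]

theorem sup_centralizer_le_normalizer (S : Subgroup G) :
    S ⊔ centralizer (S : Set G) ≤ normalizer (S : Set G) :=
  sup_le le_normalizer (centralizer_le_normalizer _)

theorem coe_sup_centralizer (S : Subgroup G) :
    ((S ⊔ centralizer (S : Set G) : Subgroup G) : Set G) =
      (S : Set G) * (centralizer (S : Set G) : Set G) :=
  coe_mul_of_right_le_normalizer_left _ _ (centralizer_le_normalizer _)

theorem iSup_le_sup_centralizer {ι : Type*} {Ss : ι → Subgroup G}
    (hcomm : ∀ i j, i ≠ j → ∀ x ∈ Ss i, ∀ y ∈ Ss j, x * y = y * x) (i : ι) :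
    ⨆ j, Ss j ≤ Ss i ⊔ centralizer (Ss i : Set G) := by
  refine iSup_le fun j => ?_
  rcases eq_or_ne j i with rfl | hji
  · exact le_sup_left
  · exact fun y hy => mem_sup_right fun x hx => hcomm i j hji.symm x hx y hy

theorem coe_eq_mul_inf_of_mul_eq_univ {K N T : Subgroup G} [N.Normal]
    (hKN : (K : Set G) * (N : Set G) = Set.univ) (hNT : N ≤ T) :
    (T : Set G) = (N : Set G) * ((K ⊓ T : Subgroup G) : Set G) := by
  rw [mul_inf_assoc N K T hNT, ← normal_mul, sup_comm, mul_normal, hKN, Set.univ_inter]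

end Subgroup

open Subgroup

section InducedAuts

variable {G : Type} [Group G] {S : Subgroup G}

def IsInducedBy (σ : MulAut S) (x : G) : Prop :=
  ∀ s : S, (σ s : G) = x⁻¹ * s * x

theorem IsInducedBy.conj_mul {σ : MulAut S} {y : G} (h : IsInducedBy σ y) (a : S) :
    IsInducedBy (MulAut.conj a * σ) (y * (a : G)⁻¹) := fun s => by
  simp only [MulAut.mul_apply, MulAut.conj_apply, coe_mul, coe_inv, h s]
  group

theorem IsInducedBy.of_mul_centralizer {σ : MulAut S} {x z : G} (h : IsInducedBy σ (x * z))
    (hz : z ∈ centralizer (S : Set G)) : IsInducedBy σ x := fun s =>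
  calc (σ s : G)
    _ = σ s * z * z⁻¹ := by group
    _ = z * σ s * z⁻¹ := by rw [hz _ (σ s).2]
    _ = x⁻¹ * s * x := by rw [h s]; group

theorem range_conj_mul_inducedAuts_subset (H : Subgroup G) :
    ((MulAut.conj : S →* MulAut S).range : Set (MulAut S)) * inducedAuts H S ⊆
      inducedAuts ⊤ S := by
  rintro _ ⟨_, ⟨a, rfl⟩, σ, ⟨y, -, hy, hσ⟩, rfl⟩
  exact ⟨y * (a : G)⁻¹, mem_top _, mul_mem hy (inv_mem (le_normalizer a.2)),
    IsInducedBy.conj_mul hσ a⟩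

theorem inducedAuts_top_subset_range_conj_mul {K N : Subgroup G}
    (hKN : (K : Set G) * (N : Set G) = Set.univ) (hN : N ≤ S ⊔ centralizer (S : Set G)) :
    inducedAuts ⊤ S ⊆
      ((MulAut.conj : S →* MulAut S).range : Set (MulAut S)) * inducedAuts K S := by
  rintro σ ⟨x, -, hx, hσ⟩
  obtain ⟨k, hk, m, hm, rfl⟩ : x ∈ (K : Set G) * (N : Set G) := hKN ▸ Set.mem_univ x
  have hmS := hN hm
  have hkS : k ∈ normalizer (S : Set G) := by
    simpa using mul_mem hx (inv_mem (sup_centralizer_le_normalizer S hmS))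
  obtain ⟨s, hs, z, hz, rfl⟩ : m ∈ (S : Set G) * (centralizer (S : Set G) : Set G) := by
    rw [← coe_sup_centralizer]; exact hmS
  have hσ' : IsInducedBy σ (k * s * z) := by rw [mul_assoc]; exact hσ
  have hτ : IsInducedBy (MulAut.conj ⟨s, hs⟩ * σ) k := by
    simpa using (hσ'.of_mul_centralizer hz).conj_mul ⟨s, hs⟩
  exact ⟨(MulAut.conj ⟨s, hs⟩)⁻¹, ⟨_, map_inv _ _⟩, _, ⟨k, hk, hkS, hτ⟩,
    inv_mul_cancel_left _ σ⟩

end InducedAuts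

/-- Let `N ⊴ G` be an internal direct product of nonabelian simple subgroups, `S` one of
the factors, and `G = KN`. Then (i) `N_G(S) = N ⬝ N_K(S)`; (ii) `Aut_G(S) = Inn(S) ⬝
Aut_K(S)`. -/
theorem normalizer_and_inducedAuts_factorization
    (G : Type) [Group G] (N : Subgroup G) [N.Normal]
    (n : ℕ) (Ss : Fin n → Subgroup G)
    (hprod : IsInternalDirectProductOfSimples N n Ss)
    (i : Fin n) (S : Subgroup G) (hS : S = Ss i)
    (K : Subgroup G) (hKN : (K : Set G) * (N : Set G) = Set.univ) :
    (Subgroup.normalizer (S : Set G) : Set G) = (N : Set G) * ((K ⊓ Subgroup.normalizer (S : Set G) : Subgroup G) : Set G) ∧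
    inducedAuts (⊤ : Subgroup G) S =
      (((MulAut.conj : ↥S →* MulAut ↥S).range : Subgroup (MulAut ↥S)) : Set (MulAut ↥S)) *
        inducedAuts K S := by
  subst hS
  obtain ⟨-, hsup, -, -, hcomm, -⟩ := hprod
  have hN : N ≤ Ss i ⊔ centralizer (Ss i : Set G) := by
    rw [hsup]; exact iSup_le_sup_centralizer hcomm i
  exact ⟨coe_eq_mul_inf_of_mul_eq_univ hKN (hN.trans (sup_centralizer_le_normalizer _)),
    (inducedAuts_top_subset_range_conj_mul hKN hN).antisymm
      (range_conj_mul_inducedAuts_subset K)⟩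
end
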